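/- arXiv:1902.04462 — 4 statements merged into one kernel-verified Lean document; each statement's English description precedes it below -/
import Mathlib

section
/- Let D, D' ⊆ ℝ² be open bounded convex polygons, and let Q be the convex hull of D ∪ D'. If x_c is a vertex of D such that dist(x_c, D') equals the Hausdorff distance d_H(D, D') > 0, then x_c is an extreme point (vertex) of Q. -/
noncomputable section

abbrev E2 : Type := EuclideanSpace ℝ (Fin 2)

/-- An open bounded convex polygon: the interior of the convex hull of a finite set,
assumed nonempty. -/
def IsOpenConvexPolygon (D : Set E2) : Prop :=
  ∃ S : Finset E2, D = interior (convexHull ℝ (S : Set E2)) ∧ D.Nonempty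

open Metric Set

lemma aux_closure_interior {s : Set E2} (hs : Convex ℝ s) (hcl : IsClosed s)
    (hne : (interior s).Nonempty) : closure (interior s) = s := by
  refine subset_antisymm (closure_minimal interior_subset hcl) ?_
  obtain ⟨y, hy⟩ := hne
  intro x hx
  rw [Metric.mem_closure_iff]
  intro ε hε
  set c := dist y x with hc
  have hc0 : 0 ≤ c := dist_nonneg
  set t : ℝ := min 1 (ε / (c + 1)) with ht
  have ht0 : 0 < t := lt_min one_pos (div_pos hε (by linarith))
  have ht1 : t ≤ 1 := min_le_left _ _
  have ht2 : t * (c + 1) ≤ ε := by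
    have := min_le_right 1 (ε / (c + 1))
    rw [le_div_iff₀ (by linarith : (0:ℝ) < c + 1)] at this
    exact this
  refine ⟨(1 - t) • x + t • y,
    hs.combo_self_interior_mem_interior hx hy (by linarith) ht0 (by ring), ?_⟩
  have hdist : dist x ((1 - t) • x + t • y) = t * c := by
    rw [dist_eq_norm]
    have hxy : x - ((1 - t) • x + t • y) = t • (x - y) := by module
    rw [hxy, norm_smul, Real.norm_eq_abs, abs_of_pos ht0, hc, dist_eq_norm, norm_sub_rev]
  rw [hdist]
  nlinarith

lemma aux_convexOn_infDist {s : Set E2} (hs : Convex ℝ s) (hne : s.Nonempty) :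
    ConvexOn ℝ Set.univ (fun y => Metric.infDist y s) := by
  refine ⟨convex_univ, ?_⟩
  intro x _ y _ a b ha hb hab
  obtain ⟨px, hpx, hdx⟩ := isClosed_closure.exists_infDist_eq_dist hne.closure x
  obtain ⟨py, hpy, hdy⟩ := isClosed_closure.exists_infDist_eq_dist hne.closure y
  have hmem : a • px + b • py ∈ closure s := hs.closure hpx hpy ha hb hab
  calc Metric.infDist (a • x + b • y) s
      = Metric.infDist (a • x + b • y) (closure s) := (Metric.infDist_closure).symm
    _ ≤ dist (a • x + b • y) (a • px + b • py) := Metric.infDist_le_dist_of_mem hmem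
    _ ≤ dist (a • x) (a • px) + dist (b • y) (b • py) := dist_add_add_le _ _ _ _
    _ = a * dist x px + b * dist y py := by
        rw [dist_smul₀, dist_smul₀, Real.norm_eq_abs, Real.norm_eq_abs,
          abs_of_nonneg ha, abs_of_nonneg hb]
    _ = a * Metric.infDist x s + b * Metric.infDist y s := by
        rw [← Metric.infDist_closure (s := s) (x := x),
          ← Metric.infDist_closure (s := s) (x := y), hdx, hdy]

theorem stmt3 (D D' : Set E2)
    (hD : IsOpenConvexPolygon D) (hD' : IsOpenConvexPolygon D')
    (Q : Set E2) (hQ : Q = convexHull ℝ (D ∪ D'))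
    (xc : E2) (hxc : xc ∈ Set.extremePoints ℝ (closure D))
    (hdist : Metric.infDist xc D' = Metric.hausdorffDist D D')
    (hpos : 0 < Metric.hausdorffDist D D') :
    xc ∈ Set.extremePoints ℝ (closure Q) := by
  obtain ⟨S, hDS, hDne⟩ := hD
  obtain ⟨S', hDS', hD'ne⟩ := hD'
  set P := convexHull ℝ (S : Set E2) with hP
  set P' := convexHull ℝ (S' : Set E2) with hP'
  have hPconv : Convex ℝ P := convex_convexHull ℝ _
  have hP'conv : Convex ℝ P' := convex_convexHull ℝ _
  have hPcl : IsClosed P := (S : Set E2).toFinite.isClosed_convexHull (𝕜 := ℝ)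
  have hP'cl : IsClosed P' := (S' : Set E2).toFinite.isClosed_convexHull (𝕜 := ℝ)
  have hclD : closure D = P := by
    rw [hDS]; exact aux_closure_interior hPconv hPcl (hDS ▸ hDne)
  have hclD' : closure D' = P' := by
    rw [hDS']; exact aux_closure_interior hP'conv hP'cl (hDS' ▸ hD'ne)
  have hDsub : D ⊆ P := hDS ▸ interior_subset
  have hD'sub : D' ⊆ P' := hDS' ▸ interior_subset
  have hDbd : Bornology.IsBounded D :=
    (isBounded_convexHull.mpr (S : Set E2).toFinite.isBounded).subset hDsub
  have hD'bd : Bornology.IsBounded D' :=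
    (isBounded_convexHull.mpr (S' : Set E2).toFinite.isBounded).subset hD'sub
  have hfin : EMetric.hausdorffEdist D D' ≠ ⊤ :=
    Metric.hausdorffEdist_ne_top_of_nonempty_of_bounded hDne hD'ne hDbd hD'bd
  set r := Metric.hausdorffDist D D' with hr
  set g : E2 → ℝ := fun y => Metric.infDist y D' with hg
  have hD'conv : Convex ℝ D' := by
    rw [hDS']; exact hP'conv.interior
  have hgconv : ConvexOn ℝ Set.univ g := aux_convexOn_infDist hD'conv hD'ne
  have hgD : ∀ p ∈ D, g p ≤ r := fun p hp =>
    Metric.infDist_le_hausdorffDist_of_mem hp hfin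
  have hgD' : ∀ q ∈ D', g q ≤ r := fun q hq => by
    simp only [hg, Metric.infDist_zero_of_mem hq]; exact hpos.le
  set C : Set E2 := {y | g y ≤ r} with hC
  have hCconv : Convex ℝ C := by
    have := hgconv.convex_le r
    simpa using this
  have hCcl : IsClosed C := isClosed_le (Metric.continuous_infDist_pt D') continuous_const
  have hQC : closure Q ⊆ C := by
    refine closure_minimal ?_ hCcl
    rw [hQ]
    exact convexHull_min (Set.union_subset (fun p hp => hgD p hp) (fun q hq => hgD' q hq)) hCconv
  have hSne : (S : Set E2).Nonempty := by
    by_contra h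
    rw [Set.not_nonempty_iff_eq_empty] at h
    have : P = ∅ := by rw [hP, h, convexHull_empty]
    exact (hDne.mono hDsub).ne_empty this
  have hS'ne : (S' : Set E2).Nonempty := by
    by_contra h
    rw [Set.not_nonempty_iff_eq_empty] at h
    have : P' = ∅ := by rw [hP', h, convexHull_empty]
    exact (hD'ne.mono hD'sub).ne_empty this
  have hQK : closure Q ⊆ convexJoin ℝ P P' := by
    have h1 : Q ⊆ convexHull ℝ ((S : Set E2) ∪ (S' : Set E2)) := by
      rw [hQ]
      exact convexHull_min (Set.union_subset (hDsub.trans (convexHull_mono Set.subset_union_left))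
        (hD'sub.trans (convexHull_mono Set.subset_union_right))) (convex_convexHull ℝ _)
    have h2 : convexHull ℝ ((S : Set E2) ∪ (S' : Set E2)) = convexJoin ℝ P P' :=
      convexHull_union hSne hS'ne
    have h3 : IsClosed (convexHull ℝ ((S : Set E2) ∪ (S' : Set E2))) :=
      ((S : Set E2).toFinite.union (S' : Set E2).toFinite).isClosed_convexHull (𝕜 := ℝ)
    exact (closure_minimal h1 h3).trans h2.subset
  have hDQ : closure D ⊆ closure Q := by
    refine closure_mono ?_
    rw [hQ]
    exact (Set.subset_union_left).trans (subset_convexHull ℝ _)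
  -- key: any point of closure Q where g attains the value r lies in closure D
  have hface : ∀ y ∈ closure Q, g y = r → y ∈ closure D := by
    intro y hyQ hyr
    have hyK := hQK hyQ
    rw [mem_convexJoin] at hyK
    obtain ⟨p, hp, q, hq, sa, sb, hsa, hsb, hsab, rfl⟩ := hyK
    have hgq : g q = 0 := by
      have : q ∈ closure D' := hclD' ▸ hq
      exact Metric.infDist_zero_of_mem_closure this
    have hgp : g p ≤ r := hQC (hDQ (hclD ▸ hp))
    have hconv : g (sa • p + sb • q) ≤ sa * g p + sb * g q :=
      hgconv.2 (Set.mem_univ p) (Set.mem_univ q) hsa hsb hsab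
    rw [hyr, hgq] at hconv
    have hsa1 : sa = 1 := by nlinarith
    have hsb0 : sb = 0 := by linarith
    have : sa • p + sb • q = p := by rw [hsa1, hsb0]; simp
    rw [this]
    exact hclD ▸ hp
  refine ⟨hDQ hxc.1, ?_⟩
  intro a ha b hb hseg
  have hga : g a ≤ r := hQC ha
  have hgb : g b ≤ r := hQC hb
  obtain ⟨ta, tb, hta, htb, htab, hxeq⟩ := hseg
  have hgx : g xc = r := hdist
  have hconv : g (ta • a + tb • b) ≤ ta * g a + tb * g b :=
    hgconv.2 (Set.mem_univ a) (Set.mem_univ b) hta.le htb.le htab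
  rw [hxeq, hgx] at hconv
  have hgar : g a = r := by nlinarith
  have hgbr : g b = r := by nlinarith
  have haD : a ∈ closure D := hface a ha hgar
  have hbD : b ∈ closure D := hface b hb hgbr
  exact hxc.2 haD hbD ⟨ta, tb, hta, htb, htab, hxeq⟩

end
end

section
/- Let D, D' ⊆ ℝ² be open bounded convex polygons, Q the convex hull of D ∪ D', and x_c a vertex of D with dist(x_c, D') = d_H(D, D') > 0. If the interior angle of D at x_c has opening a ∈ (0, π), then the interior angle of Q at x_c has opening at most (a + π)/2 < π. -/
noncomputable section

/-- The tangent cone of a set `C` at a point `x`: the closure of the cone of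
directions from `x` into `C`. -/
def tangentConeOf (C : Set E2) (x : E2) : Set E2 :=
  closure {v : E2 | ∃ t : ℝ, 0 ≤ t ∧ ∃ y ∈ C, v = t • (y - x)}

/-- The opening of a cone: the supremum of angles between nonzero elements. -/
noncomputable def coneOpening (K : Set E2) : ℝ :=
  sSup {θ : ℝ | ∃ u ∈ K, ∃ v ∈ K, u ≠ 0 ∧ v ≠ 0 ∧ θ = InnerProductGeometry.angle u v}

open RealInnerProductSpace

namespace Stmt4Aux

/-- 2D cross product. -/
def om (u v : E2) : ℝ := u 0 * v 1 - u 1 * v 0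

lemma inner_expand (u v : E2) : ⟪u, v⟫ = u 0 * v 0 + u 1 * v 1 := by
  simp [PiLp.inner_apply, Fin.sum_univ_two, RCLike.inner_apply]
  ring

lemma key_sq (m w : E2) : ⟪m, w⟫ ^ 2 + om m w ^ 2 = (‖m‖ * ‖w‖) ^ 2 := by
  have h1 := real_inner_self_eq_norm_sq m
  have h2 := real_inner_self_eq_norm_sq w
  rw [inner_expand] at h1 h2
  rw [mul_pow, ← h1, ← h2, inner_expand, om]
  ring

/-- signed angle of `w` relative to `m`, valid for `w` in the closed halfplane of `m`. -/
def alp (m w : E2) : ℝ := Real.arcsin (om m w / (‖m‖ * ‖w‖))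

lemma alp_le (m w : E2) : alp m w ≤ Real.pi / 2 := Real.arcsin_le_pi_div_two _
lemma neg_le_alp (m w : E2) : -(Real.pi / 2) ≤ alp m w := Real.neg_pi_div_two_le_arcsin _
lemma abs_alp_le (m w : E2) : |alp m w| ≤ Real.pi / 2 :=
  abs_le.2 ⟨neg_le_alp m w, alp_le m w⟩

lemma ratio_sq_le (m w : E2) (hm : m ≠ 0) (hw : w ≠ 0) :
    (om m w / (‖m‖ * ‖w‖)) ^ 2 ≤ 1 := by
  have hN : 0 < ‖m‖ * ‖w‖ :=
    mul_pos (norm_pos_iff.2 hm) (norm_pos_iff.2 hw)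
  rw [div_pow, div_le_one (pow_pos hN 2)]
  nlinarith [key_sq m w, sq_nonneg (⟪m, w⟫)]

lemma sin_alp (m w : E2) (hm : m ≠ 0) (hw : w ≠ 0) :
    Real.sin (alp m w) = om m w / (‖m‖ * ‖w‖) := by
  have h := ratio_sq_le m w hm hw
  have h1 : |om m w / (‖m‖ * ‖w‖)| ≤ 1 := by
    rw [← Real.sqrt_one, ← Real.sqrt_sq_eq_abs]
    exact Real.sqrt_le_sqrt (by linarith)
  rw [alp, Real.sin_arcsin (by cases abs_le.1 h1; linarith) (abs_le.1 h1).2]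

lemma cos_alp (m w : E2) (hm : m ≠ 0) (hw : w ≠ 0) (hp : 0 ≤ ⟪m, w⟫) :
    Real.cos (alp m w) = ⟪m, w⟫ / (‖m‖ * ‖w‖) := by
  have hN : 0 < ‖m‖ * ‖w‖ :=
    mul_pos (norm_pos_iff.2 hm) (norm_pos_iff.2 hw)
  have hN2 : ((‖m‖ * ‖w‖) ^ 2) ≠ 0 := ne_of_gt (pow_pos hN 2)
  rw [alp, Real.cos_arcsin]
  rw [show (1 : ℝ) - (om m w / (‖m‖ * ‖w‖)) ^ 2 = (⟪m, w⟫ / (‖m‖ * ‖w‖)) ^ 2 by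
    rw [div_pow, div_pow, eq_div_iff hN2, sub_mul, div_mul_cancel₀ _ hN2, one_mul]
    linear_combination (-1 : ℝ) * key_sq m w]
  rw [Real.sqrt_sq (div_nonneg hp (le_of_lt hN))]

lemma cos_alp_sub (m w w' : E2) (hm : m ≠ 0) (hw : w ≠ 0) (hw' : w' ≠ 0)
    (hp : 0 ≤ ⟪m, w⟫) (hp' : 0 ≤ ⟪m, w'⟫) :
    Real.cos (alp m w - alp m w') = ⟪w, w'⟫ / (‖w‖ * ‖w'‖) := by
  have hN : (0:ℝ) < ‖m‖ := norm_pos_iff.2 hm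
  have hNw : (0:ℝ) < ‖w‖ := norm_pos_iff.2 hw
  have hNw' : (0:ℝ) < ‖w'‖ := norm_pos_iff.2 hw'
  have lag : ⟪w, w'⟫ * ⟪m, m⟫ = ⟪m, w⟫ * ⟪m, w'⟫ + om m w * om m w' := by
    simp only [inner_expand, om]; ring
  have hmm : ⟪m, m⟫ = ‖m‖ ^ 2 := real_inner_self_eq_norm_sq m
  rw [hmm] at lag
  have hD : (‖m‖ * ‖w‖) * (‖m‖ * ‖w'‖) ≠ 0 := by positivity
  have hD2 : ‖w‖ * ‖w'‖ ≠ 0 := by positivity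
  rw [Real.cos_sub, cos_alp m w hm hw hp, cos_alp m w' hm hw' hp',
    sin_alp m w hm hw, sin_alp m w' hm hw', div_mul_div_comm, div_mul_div_comm,
    ← add_div, div_eq_div_iff hD hD2]
  linear_combination (-(‖w‖ * ‖w'‖)) * lag

lemma alp_angle (m w w' : E2) (hm : m ≠ 0) (hw : w ≠ 0) (hw' : w' ≠ 0)
    (hp : 0 ≤ ⟪m, w⟫) (hp' : 0 ≤ ⟪m, w'⟫) :
    InnerProductGeometry.angle w w' = |alp m w - alp m w'| := by
  have habs : |alp m w - alp m w'| ≤ Real.pi := by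
    have h1 := abs_alp_le m w; have h2 := abs_alp_le m w'
    calc |alp m w - alp m w'| ≤ |alp m w| + |alp m w'| := abs_sub _ _
      _ ≤ Real.pi := by linarith
  rw [InnerProductGeometry.angle, ← cos_alp_sub m w w' hm hw hw' hp hp',
    ← Real.cos_abs, Real.arccos_cos (abs_nonneg _) habs]


lemma nonneg_of_div_nonneg {x c : ℝ} (h : 0 ≤ x / c) (hc : 0 < c) : 0 ≤ x := by
  rw [← div_mul_cancel₀ x (ne_of_gt hc)]
  exact mul_nonneg h hc.le

lemma alp_smul (m w : E2) (c : ℝ) (hc : 0 < c) : alp m (c • w) = alp m w := by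
  rcases eq_or_ne w 0 with rfl | hw
  · rw [smul_zero]
  rcases eq_or_ne m 0 with rfl | hm
  · simp [alp, om]
  have hNw : (0:ℝ) < ‖w‖ := norm_pos_iff.2 hw
  have hNm : (0:ℝ) < ‖m‖ := norm_pos_iff.2 hm
  rw [alp, alp, norm_smul, Real.norm_eq_abs, abs_of_pos hc,
    show om m (c • w) = c * om m w by
      simp only [om, PiLp.smul_apply, smul_eq_mul]; ring]
  congr 1
  field_simp

lemma sin_alp_sub (m u v : E2) (hm : m ≠ 0) (hu : u ≠ 0) (hv : v ≠ 0)
    (hpu : 0 ≤ ⟪m, u⟫) (hpv : 0 ≤ ⟪m, v⟫) :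
    Real.sin (alp m v - alp m u) = om u v / (‖u‖ * ‖v‖) := by
  have hmm : ⟪m, m⟫ = ‖m‖ ^ 2 := real_inner_self_eq_norm_sq m
  have lag2 : om m v * ⟪m, u⟫ - ⟪m, v⟫ * om m u = om u v * ‖m‖ ^ 2 := by
    rw [← hmm]; simp only [inner_expand, om]; ring
  have hNm : (0:ℝ) < ‖m‖ := norm_pos_iff.2 hm
  have hNu : (0:ℝ) < ‖u‖ := norm_pos_iff.2 hu
  have hNv : (0:ℝ) < ‖v‖ := norm_pos_iff.2 hv
  have hD : (‖m‖ * ‖v‖) * (‖m‖ * ‖u‖) ≠ 0 := by positivity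
  have hD2 : ‖u‖ * ‖v‖ ≠ 0 := by positivity
  rw [Real.sin_sub, sin_alp m v hm hv, sin_alp m u hm hu, cos_alp m u hm hu hpu,
    cos_alp m v hm hv hpv, div_mul_div_comm, div_mul_div_comm, div_sub_div_same,
    div_eq_div_iff hD hD2]
  linear_combination (‖u‖ * ‖v‖) * lag2

lemma alp_le_max (m u v : E2) (hm : m ≠ 0) (hu : u ≠ 0) (hv : v ≠ 0)
    (hpu : 0 ≤ ⟪m, u⟫) (hpv : 0 ≤ ⟪m, v⟫) {s t : ℝ} (hs : 0 ≤ s) (ht : 0 ≤ t)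
    (hW : s • u + t • v ≠ 0) :
    alp m (s • u + t • v) ≤ max (alp m u) (alp m v) := by
  by_contra hC
  push_neg at hC
  set W := s • u + t • v with hWdef
  have hCA : alp m u < alp m W := lt_of_le_of_lt (le_max_left _ _) hC
  have hCB : alp m v < alp m W := lt_of_le_of_lt (le_max_right _ _) hC
  have hNm : (0:ℝ) < ‖m‖ := norm_pos_iff.2 hm
  have hNu : (0:ℝ) < ‖u‖ := norm_pos_iff.2 hu
  have hNv : (0:ℝ) < ‖v‖ := norm_pos_iff.2 hv
  have hNW : (0:ℝ) < ‖W‖ := norm_pos_iff.2 hW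
  have hpW : 0 ≤ ⟪m, W⟫ := by
    rw [hWdef, inner_add_right, real_inner_smul_right, real_inner_smul_right]
    nlinarith [mul_nonneg hs hpu, mul_nonneg ht hpv]
  have h1 := sin_alp_sub m u W hm hu hW hpu hpW
  have h2 := sin_alp_sub m v W hm hv hW hpv hpW
  have hle1 : alp m W - alp m u ≤ Real.pi := by
    have := alp_le m W; have := neg_le_alp m u; linarith
  have hle2 : alp m W - alp m v ≤ Real.pi := by
    have := alp_le m W; have := neg_le_alp m v; linarith
  have hs1 : 0 ≤ Real.sin (alp m W - alp m u) :=
    Real.sin_nonneg_of_nonneg_of_le_pi (by linarith) hle1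
  have hs2 : 0 ≤ Real.sin (alp m W - alp m v) :=
    Real.sin_nonneg_of_nonneg_of_le_pi (by linarith) hle2
  have homu : om u W = t * om u v := by
    rw [hWdef]
    simp only [om, PiLp.add_apply, PiLp.smul_apply, smul_eq_mul]
    ring
  have homv : om v W = -(s * om u v) := by
    rw [hWdef]
    simp only [om, PiLp.add_apply, PiLp.smul_apply, smul_eq_mul]
    ring
  have hg1 : 0 ≤ om u W := nonneg_of_div_nonneg (h1 ▸ hs1) (mul_pos hNu hNW)
  have hg2 : 0 ≤ om v W := nonneg_of_div_nonneg (h2 ▸ hs2) (mul_pos hNv hNW)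
  rcases lt_trichotomy (om u v) 0 with hω | hω | hω
  · -- t must vanish
    have ht0 : t = 0 := by
      have hg1' : 0 ≤ t * om u v := by rw [← homu]; exact hg1
      by_contra hne
      have htpos : 0 < t := lt_of_le_of_ne ht (Ne.symm hne)
      have := mul_neg_of_pos_of_neg htpos hω
      linarith
    have hWs : W = s • u := by rw [hWdef, ht0, zero_smul, add_zero]
    have hspos : 0 < s := by
      rcases lt_or_eq_of_le hs with h | h
      · exact h
      · exfalso; apply hW; rw [hWdef, ht0, ← h, zero_smul, zero_smul, add_zero]
    have : alp m W = alp m u := by rw [hWs, alp_smul m u s hspos]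
    linarith
  · -- degenerate case
    have hd1 : alp m W - alp m u = Real.pi := by
      by_contra hne
      have hlt : alp m W - alp m u < Real.pi := lt_of_le_of_ne hle1 hne
      have hpos := Real.sin_pos_of_pos_of_lt_pi (by linarith : 0 < alp m W - alp m u) hlt
      rw [h1, homu, hω, mul_zero, zero_div] at hpos
      linarith
    have hd2 : alp m W - alp m v = Real.pi := by
      by_contra hne
      have hlt : alp m W - alp m v < Real.pi := lt_of_le_of_ne hle2 hne
      have hpos := Real.sin_pos_of_pos_of_lt_pi (by linarith : 0 < alp m W - alp m v) hlt
      rw [h2, homv, hω, mul_zero, neg_zero, zero_div] at hpos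
      linarith
    have hAu : alp m u = -(Real.pi / 2) := by
      have := alp_le m W; have := neg_le_alp m u; linarith
    have hAW : alp m W = Real.pi / 2 := by linarith
    have hBv : alp m v = -(Real.pi / 2) := by linarith
    have hsu : om m u / (‖m‖ * ‖u‖) = -1 := by
      rw [← sin_alp m u hm hu, hAu, Real.sin_neg, Real.sin_pi_div_two]
    have hsv : om m v / (‖m‖ * ‖v‖) = -1 := by
      rw [← sin_alp m v hm hv, hBv, Real.sin_neg, Real.sin_pi_div_two]
    have hsW : om m W / (‖m‖ * ‖W‖) = 1 := by
      rw [← sin_alp m W hm hW, hAW, Real.sin_pi_div_two]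
    rw [div_eq_iff (ne_of_gt (mul_pos hNm hNu))] at hsu
    rw [div_eq_iff (ne_of_gt (mul_pos hNm hNv))] at hsv
    rw [div_eq_iff (ne_of_gt (mul_pos hNm hNW))] at hsW
    have hexp : om m W = s * om m u + t * om m v := by
      rw [hWdef]
      simp only [om, PiLp.add_apply, PiLp.smul_apply, smul_eq_mul]
      ring
    nlinarith [mul_pos hNm hNW, mul_nonneg hs (mul_pos hNm hNu).le,
      mul_nonneg ht (mul_pos hNm hNv).le]
  · -- s must vanish
    have hs0 : s = 0 := by
      have hg2' : 0 ≤ -(s * om u v) := by rw [← homv]; exact hg2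
      by_contra hne
      have hspos : 0 < s := lt_of_le_of_ne hs (Ne.symm hne)
      have := mul_pos hspos hω
      linarith
    have hWs : W = t • v := by rw [hWdef, hs0, zero_smul, zero_add]
    have htpos : 0 < t := by
      rcases lt_or_eq_of_le ht with h | h
      · exact h
      · exfalso; apply hW; rw [hWdef, hs0, ← h, zero_smul, zero_smul, add_zero]
    have : alp m W = alp m v := by rw [hWs, alp_smul m v t htpos]
    linarith

lemma min_le_alp (m u v : E2) (hm : m ≠ 0) (hu : u ≠ 0) (hv : v ≠ 0)
    (hpu : 0 ≤ ⟪m, u⟫) (hpv : 0 ≤ ⟪m, v⟫) {s t : ℝ} (hs : 0 ≤ s) (ht : 0 ≤ t)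
    (hW : s • u + t • v ≠ 0) :
    min (alp m u) (alp m v) ≤ alp m (s • u + t • v) := by
  by_contra hC
  push_neg at hC
  set W := s • u + t • v with hWdef
  have hCA : alp m W < alp m u := lt_of_lt_of_le hC (min_le_left _ _)
  have hCB : alp m W < alp m v := lt_of_lt_of_le hC (min_le_right _ _)
  have hNm : (0:ℝ) < ‖m‖ := norm_pos_iff.2 hm
  have hNu : (0:ℝ) < ‖u‖ := norm_pos_iff.2 hu
  have hNv : (0:ℝ) < ‖v‖ := norm_pos_iff.2 hv
  have hNW : (0:ℝ) < ‖W‖ := norm_pos_iff.2 hW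
  have hpW : 0 ≤ ⟪m, W⟫ := by
    rw [hWdef, inner_add_right, real_inner_smul_right, real_inner_smul_right]
    nlinarith [mul_nonneg hs hpu, mul_nonneg ht hpv]
  have h1 := sin_alp_sub m W u hm hW hu hpW hpu
  have h2 := sin_alp_sub m W v hm hW hv hpW hpv
  have hle1 : alp m u - alp m W ≤ Real.pi := by
    have := alp_le m u; have := neg_le_alp m W; linarith
  have hle2 : alp m v - alp m W ≤ Real.pi := by
    have := alp_le m v; have := neg_le_alp m W; linarith
  have hs1 : 0 ≤ Real.sin (alp m u - alp m W) :=
    Real.sin_nonneg_of_nonneg_of_le_pi (by linarith) hle1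
  have hs2 : 0 ≤ Real.sin (alp m v - alp m W) :=
    Real.sin_nonneg_of_nonneg_of_le_pi (by linarith) hle2
  have homu : om W u = -(t * om u v) := by
    rw [hWdef]
    simp only [om, PiLp.add_apply, PiLp.smul_apply, smul_eq_mul]
    ring
  have homv : om W v = s * om u v := by
    rw [hWdef]
    simp only [om, PiLp.add_apply, PiLp.smul_apply, smul_eq_mul]
    ring
  have hg1 : 0 ≤ om W u := nonneg_of_div_nonneg (h1 ▸ hs1) (mul_pos hNW hNu)
  have hg2 : 0 ≤ om W v := nonneg_of_div_nonneg (h2 ▸ hs2) (mul_pos hNW hNv)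
  rcases lt_trichotomy (om u v) 0 with hω | hω | hω
  · -- s must vanish
    have hs0 : s = 0 := by
      have hg2' : 0 ≤ s * om u v := by rw [← homv]; exact hg2
      by_contra hne
      have hspos : 0 < s := lt_of_le_of_ne hs (Ne.symm hne)
      have := mul_neg_of_pos_of_neg hspos hω
      linarith
    have hWs : W = t • v := by rw [hWdef, hs0, zero_smul, zero_add]
    have htpos : 0 < t := by
      rcases lt_or_eq_of_le ht with h | h
      · exact h
      · exfalso; apply hW; rw [hWdef, hs0, ← h, zero_smul, zero_smul, add_zero]
    have : alp m W = alp m v := by rw [hWs, alp_smul m v t htpos]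
    linarith
  · -- degenerate case
    have hd1 : alp m u - alp m W = Real.pi := by
      by_contra hne
      have hlt : alp m u - alp m W < Real.pi := lt_of_le_of_ne hle1 hne
      have hpos := Real.sin_pos_of_pos_of_lt_pi (by linarith : 0 < alp m u - alp m W) hlt
      rw [h1, homu, hω, mul_zero, neg_zero, zero_div] at hpos
      linarith
    have hd2 : alp m v - alp m W = Real.pi := by
      by_contra hne
      have hlt : alp m v - alp m W < Real.pi := lt_of_le_of_ne hle2 hne
      have hpos := Real.sin_pos_of_pos_of_lt_pi (by linarith : 0 < alp m v - alp m W) hlt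
      rw [h2, homv, hω, mul_zero, zero_div] at hpos
      linarith
    have hAu : alp m u = Real.pi / 2 := by
      have := alp_le m u; have := neg_le_alp m W; linarith
    have hAW : alp m W = -(Real.pi / 2) := by linarith
    have hBv : alp m v = Real.pi / 2 := by linarith
    have hsu : om m u / (‖m‖ * ‖u‖) = 1 := by
      rw [← sin_alp m u hm hu, hAu, Real.sin_pi_div_two]
    have hsv : om m v / (‖m‖ * ‖v‖) = 1 := by
      rw [← sin_alp m v hm hv, hBv, Real.sin_pi_div_two]
    have hsW : om m W / (‖m‖ * ‖W‖) = -1 := by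
      rw [← sin_alp m W hm hW, hAW, Real.sin_neg, Real.sin_pi_div_two]
    rw [div_eq_iff (ne_of_gt (mul_pos hNm hNu))] at hsu
    rw [div_eq_iff (ne_of_gt (mul_pos hNm hNv))] at hsv
    rw [div_eq_iff (ne_of_gt (mul_pos hNm hNW))] at hsW
    have hexp : om m W = s * om m u + t * om m v := by
      rw [hWdef]
      simp only [om, PiLp.add_apply, PiLp.smul_apply, smul_eq_mul]
      ring
    nlinarith [mul_pos hNm hNW, mul_nonneg hs (mul_pos hNm hNu).le,
      mul_nonneg ht (mul_pos hNm hNv).le]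
  · -- t must vanish
    have ht0 : t = 0 := by
      have hg1' : 0 ≤ -(t * om u v) := by rw [← homu]; exact hg1
      by_contra hne
      have htpos : 0 < t := lt_of_le_of_ne ht (Ne.symm hne)
      have := mul_pos htpos hω
      linarith
    have hWs : W = s • u := by rw [hWdef, ht0, zero_smul, add_zero]
    have hspos : 0 < s := by
      rcases lt_or_eq_of_le hs with h | h
      · exact h
      · exfalso; apply hW; rw [hWdef, ht0, ← h, zero_smul, zero_smul, add_zero]
    have : alp m W = alp m u := by rw [hWs, alp_smul m u s hspos]
    linarith

end Stmt4Aux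

open Stmt4Aux

set_option maxHeartbeats 2000000 in
theorem stmt4 (D D' : Set E2)
    (hD : IsOpenConvexPolygon D) (hD' : IsOpenConvexPolygon D')
    (Q : Set E2) (hQ : Q = convexHull ℝ (D ∪ D'))
    (xc : E2) (hxc : xc ∈ Set.extremePoints ℝ (closure D))
    (hdist : Metric.infDist xc D' = Metric.hausdorffDist D D')
    (hpos : 0 < Metric.hausdorffDist D D')
    (a : ℝ) (ha : a = coneOpening (tangentConeOf (closure D) xc))
    (ha' : a ∈ Set.Ioo (0:ℝ) Real.pi) :
    coneOpening (tangentConeOf (closure Q) xc) ≤ (a + Real.pi) / 2 ∧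
      (a + Real.pi) / 2 < Real.pi := by
  obtain ⟨ha0, haπ⟩ := ha'
  have hπ := Real.pi_pos
  refine ⟨?_, by linarith⟩
  obtain ⟨S, hDeq, hDne⟩ := hD
  obtain ⟨S', hD'eq, hD'ne⟩ := hD'
  have hDconv : Convex ℝ D := by rw [hDeq]; exact (convex_convexHull ℝ _).interior
  have hD'conv : Convex ℝ D' := by rw [hD'eq]; exact (convex_convexHull ℝ _).interior
  have hDbdd : Bornology.IsBounded D := by
    rw [hDeq]
    exact (S.finite_toSet.isCompact_convexHull ℝ).isBounded.subset interior_subset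
  have hD'bdd : Bornology.IsBounded D' := by
    rw [hD'eq]
    exact (S'.finite_toSet.isCompact_convexHull ℝ).isBounded.subset interior_subset
  set K := closure D with hKdef
  set K' := closure D' with hK'def
  have hKcomp : IsCompact K := hDbdd.isCompact_closure
  have hK'comp : IsCompact K' := hD'bdd.isCompact_closure
  have hKne : K.Nonempty := hDne.closure
  have hK'ne : K'.Nonempty := hD'ne.closure
  have hKconv : Convex ℝ K := hDconv.closure
  have hK'conv : Convex ℝ K' := hD'conv.closure
  set d := Metric.infDist xc D' with hd
  have hdpos : 0 < d := by rw [hdist]; exact hpos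
  have hEdist : EMetric.hausdorffEdist K K' ≠ ⊤ :=
    Metric.hausdorffEdist_ne_top_of_nonempty_of_bounded hKne hK'ne
      hKcomp.isBounded hK'comp.isBounded
  have hHK : Metric.hausdorffDist K K' = d := by
    rw [hKdef, hK'def, Metric.hausdorffDist_closure, ← hdist]
  have hdK' : Metric.infDist xc K' = d := by rw [hK'def, Metric.infDist_closure]
  obtain ⟨ystar, hystar, hyst⟩ := hK'comp.exists_infDist_eq_dist hK'ne xc
  set m := ystar - xc with hmdef
  have hmnorm : ‖m‖ = d := by
    rw [hmdef, ← dist_eq_norm ystar xc, dist_comm, ← hyst, hdK']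
  have hm0 : m ≠ 0 := by
    intro h; rw [h, norm_zero] at hmnorm; linarith
  have hfar : ∀ z ∈ K', d ≤ dist xc z := by
    intro z hz
    rw [← hdK']
    exact Metric.infDist_le_dist_of_mem hz
  -- (S1) every point of K' is in the halfplane at depth d²
  have halfK' : ∀ y ∈ K', d ^ 2 ≤ ⟪m, y - xc⟫ := by
    intro y hy
    have hme : 0 ≤ ⟪m, y - ystar⟫ := by
      by_contra hI
      push_neg at hI
      set e := y - ystar with he
      have he0 : e ≠ 0 := by
        intro h; rw [h, inner_zero_right] at hI; linarith
      have hepos : (0:ℝ) < ‖e‖ ^ 2 := pow_pos (norm_pos_iff.2 he0) 2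
      set t := min 1 (-⟪m, e⟫ / ‖e‖ ^ 2) with ht
      have ht0 : 0 < t := lt_min one_pos (div_pos (by linarith) hepos)
      have ht1 : t ≤ 1 := min_le_left _ _
      have htle : t * ‖e‖ ^ 2 ≤ -⟪m, e⟫ := by
        have h5 : t ≤ -⟪m, e⟫ / ‖e‖ ^ 2 := min_le_right _ _
        calc t * ‖e‖ ^ 2 ≤ (-⟪m, e⟫ / ‖e‖ ^ 2) * ‖e‖ ^ 2 :=
              mul_le_mul_of_nonneg_right h5 hepos.le
          _ = -⟪m, e⟫ := div_mul_cancel₀ _ (ne_of_gt hepos)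
      have hmem : ystar + t • e ∈ K' := by
        have h2 := hK'conv hystar hy (by linarith : (0:ℝ) ≤ 1 - t) ht0.le (by ring)
        convert h2 using 1
        rw [he]
        module
      have hge := hfar _ hmem
      rw [dist_eq_norm] at hge
      have hxcside : xc - (ystar + t • e) = -(m + t • e) := by
        rw [hmdef]; module
      rw [hxcside, norm_neg] at hge
      have hsq : ‖m + t • e‖ ^ 2 = ‖m‖ ^ 2 + 2 * (t * ⟪m, e⟫) + t ^ 2 * ‖e‖ ^ 2 := by
        rw [norm_add_sq_real, real_inner_smul_right, norm_smul, Real.norm_eq_abs,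
          abs_of_pos ht0, mul_pow]
      have hge2 : d ^ 2 ≤ ‖m + t • e‖ ^ 2 := by
        have := norm_nonneg (m + t • e)
        nlinarith
      rw [hsq, hmnorm] at hge2
      nlinarith
    have hsplit : y - xc = m + (y - ystar) := by rw [hmdef]; abel
    rw [hsplit, inner_add_right, real_inner_self_eq_norm_sq, hmnorm]
    linarith
  -- (F2) K lies in the closed halfplane of m
  have halfK : ∀ p ∈ K, 0 ≤ ⟪m, p - xc⟫ := by
    intro p hp
    obtain ⟨q, hqK', hqd⟩ := hK'comp.exists_infDist_eq_dist hK'ne p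
    have h1 : dist p q ≤ d := by
      rw [← hqd, ← hHK]
      exact Metric.infDist_le_hausdorffDist_of_mem hp hEdist
    have h2 := halfK' q hqK'
    have hsplit : p - xc = (q - xc) + (p - q) := by abel
    have h3 : -(d * d) ≤ ⟪m, p - q⟫ := by
      have h4 := real_inner_le_norm m (q - p)
      have hn : ‖q - p‖ ≤ d := by rw [← dist_eq_norm, dist_comm]; exact h1
      have h5 : ⟪m, q - p⟫ ≤ d * d := by
        calc ⟪m, q - p⟫ ≤ ‖m‖ * ‖q - p‖ := h4
          _ ≤ d * d := by rw [hmnorm]; nlinarith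
      have h6 : ⟪m, p - q⟫ = -⟪m, q - p⟫ := by
        rw [← inner_neg_right]; congr 1; abel
      linarith
    rw [hsplit, inner_add_right]
    nlinarith
  -- pairs of directions into K have angle at most a
  have Dpair : ∀ p ∈ K, ∀ p' ∈ K, p ≠ xc → p' ≠ xc →
      |alp m (p - xc) - alp m (p' - xc)| ≤ a := by
    intro p hp p' hp' h1 h2
    rw [← alp_angle m _ _ hm0 (sub_ne_zero.2 h1) (sub_ne_zero.2 h2)
      (halfK p hp) (halfK p' hp')]
    rw [ha, coneOpening]
    apply le_csSup
    · refine ⟨Real.pi, ?_⟩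
      rintro θ ⟨u, _, v, _, _, _, rfl⟩
      exact InnerProductGeometry.angle_le_pi u v
    · refine ⟨p - xc, ?_, p' - xc, ?_, sub_ne_zero.2 h1, sub_ne_zero.2 h2, rfl⟩
      · exact subset_closure ⟨1, zero_le_one, p, hp, (one_smul ℝ _).symm⟩
      · exact subset_closure ⟨1, zero_le_one, p', hp', (one_smul ℝ _).symm⟩
  -- key per-point fact for points of K'
  have DFACT : ∀ y ∈ K', d ≤ ‖y - xc‖ ∧ (alp m (y - xc) = 0 ∨
      ∃ p ∈ K, p ≠ xc ∧ |2 * alp m (y - xc) - alp m (p - xc)| ≤ Real.pi / 2) := by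
    intro y hy
    have hS1 := halfK' y hy
    have hwfar : d ≤ ‖y - xc‖ := by
      have h2 := real_inner_le_norm m (y - xc)
      rw [hmnorm] at h2
      nlinarith
    refine ⟨hwfar, ?_⟩
    obtain ⟨p, hpK, hpd⟩ := hKcomp.exists_infDist_eq_dist hKne y
    have hpled : dist y p ≤ d := by
      rw [← hpd]
      have h7 := Metric.infDist_le_hausdorffDist_of_mem hy
        (by rw [Metric.hausdorffEDist_comm]; exact hEdist)
      rwa [Metric.hausdorffDist_comm, hHK] at h7
    by_cases hpxc : p = xc
    · left
      have h1 : ‖y - xc‖ = d := by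
        refine le_antisymm ?_ hwfar
        rw [← dist_eq_norm]
        rw [hpxc] at hpled
        exact hpled
      have h2 : ‖m - (y - xc)‖ ^ 2 ≤ 0 := by
        rw [norm_sub_sq_real, hmnorm, h1]
        nlinarith
      have h3 : m = y - xc := by
        have h4 := sq_nonneg ‖m - (y - xc)‖
        have h5 : ‖m - (y - xc)‖ ^ 2 = 0 := le_antisymm h2 h4
        have h6 : ‖m - (y - xc)‖ = 0 := by
          have h7 := sq_abs ‖m - (y - xc)‖
          nlinarith [abs_nonneg ‖m - (y - xc)‖, abs_norm (m - (y - xc))]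
        rw [norm_eq_zero, sub_eq_zero] at h6
        exact h6
      rw [← h3, alp]
      have h7 : om m m = 0 := by rw [om]; ring
      rw [h7, zero_div, Real.arcsin_zero]
    · refine Or.inr ⟨p, hpK, hpxc, ?_⟩
      set w := y - xc with hwdef
      set q := p - xc with hqdef
      have hq0 : q ≠ 0 := sub_ne_zero.2 hpxc
      have hw0 : w ≠ 0 := by
        intro h; rw [h, norm_zero] at hwfar; linarith
      have hwq : ‖w - q‖ ≤ d := by
        have h8 : w - q = y - p := by rw [hwdef, hqdef]; abel
        rw [h8, ← dist_eq_norm]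
        exact hpled
      have hiwq : ‖w‖ ^ 2 + ‖q‖ ^ 2 - d ^ 2 ≤ 2 * ⟪w, q⟫ := by
        have h9 := norm_sub_sq_real w q
        nlinarith [norm_nonneg (w - q)]
      have hqpos : 0 < ‖q‖ := norm_pos_iff.2 hq0
      have hwpos : 0 < ‖w‖ := lt_of_lt_of_le hdpos hwfar
      have hinnerpos : 0 ≤ ⟪w, q⟫ := by nlinarith
      set β := Real.arcsin (d / ‖w‖) with hβdef
      have hratio1 : d / ‖w‖ ≤ 1 := (div_le_one hwpos).2 hwfar
      have hratio0 : 0 ≤ d / ‖w‖ := by positivity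
      have hsinβ : Real.sin β = d / ‖w‖ := Real.sin_arcsin (by linarith) hratio1
      have hβ0 : 0 ≤ β := Real.arcsin_nonneg.2 hratio0
      have hβπ : β ≤ Real.pi / 2 := Real.arcsin_le_pi_div_two _
      have hmw : 0 ≤ ⟪m, w⟫ := by nlinarith
      have hclaim1 : |alp m w| ≤ Real.pi / 2 - β := by
        have h1 : Real.cos (Real.pi / 2 - β) ≤ Real.cos |alp m w| := by
          rw [Real.cos_pi_div_two_sub, hsinβ, Real.cos_abs,
            cos_alp m w hm0 hw0 hmw, hmnorm]
          rw [div_le_div_iff₀ hwpos (by positivity)]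
          nlinarith [hS1, hwpos, hdpos]
        have hmem1 : |alp m w| ∈ Set.Icc 0 Real.pi :=
          ⟨abs_nonneg _, by have := abs_alp_le m w; linarith⟩
        have hmem2 : Real.pi / 2 - β ∈ Set.Icc 0 Real.pi := ⟨by linarith, by linarith⟩
        exact (Real.strictAntiOn_cos.le_iff_ge hmem2 hmem1).1 h1
      have hclaim2 : |alp m w - alp m q| ≤ β := by
        rw [← alp_angle m w q hm0 hw0 hq0 hmw (halfK p hpK)]
        have hw2 : d ^ 2 ≤ ‖w‖ ^ 2 := by nlinarith [hwfar, hdpos]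
        have hkey : ‖q‖ ^ 2 * (‖w‖ ^ 2 - d ^ 2) ≤ ⟪w, q⟫ ^ 2 := by
          nlinarith [sq_nonneg (‖w‖ ^ 2 - d ^ 2 - ‖q‖ ^ 2), hiwq, hinnerpos, hw2,
            sq_nonneg ‖q‖]
        have hsq2 : 1 - (d / ‖w‖) ^ 2 ≤ (⟪w, q⟫ / (‖w‖ * ‖q‖)) ^ 2 := by
          rw [div_pow, div_pow,
            show (1:ℝ) - d ^ 2 / ‖w‖ ^ 2 = (‖w‖ ^ 2 - d ^ 2) / ‖w‖ ^ 2 by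
              field_simp]
          rw [div_le_div_iff₀ (by positivity) (by positivity)]
          nlinarith [mul_le_mul_of_nonneg_right hkey (sq_nonneg ‖w‖)]
        have hratio2 : Real.cos β ≤ ⟪w, q⟫ / (‖w‖ * ‖q‖) := by
          rw [hβdef, Real.cos_arcsin]
          have h5 : Real.sqrt (1 - (d / ‖w‖) ^ 2) ≤
              Real.sqrt ((⟪w, q⟫ / (‖w‖ * ‖q‖)) ^ 2) := Real.sqrt_le_sqrt hsq2
          rwa [Real.sqrt_sq (by positivity)] at h5
        rw [InnerProductGeometry.angle]
        calc Real.arccos (⟪w, q⟫ / (‖w‖ * ‖q‖)) ≤ Real.arccos (Real.cos β) := by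
              rw [Real.arccos_eq_pi_div_two_sub_arcsin, Real.arccos_eq_pi_div_two_sub_arcsin]
              linarith [Real.monotone_arcsin hratio2]
          _ = β := Real.arccos_cos hβ0 (by linarith)
      have h6 : |2 * alp m w - alp m q| ≤ |alp m w| + |alp m w - alp m q| := by
        have h7 : 2 * alp m w - alp m q = alp m w + (alp m w - alp m q) := by ring
        rw [h7]
        exact abs_add_le _ _
      linarith
  -- the target constants
  set T := (a + Real.pi) / 2 with hTdef
  have hT2 : T ≤ Real.pi := by rw [hTdef]; linarith
  have hTge : Real.pi / 2 ≤ T := by rw [hTdef]; linarith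
  have hT0 : 0 ≤ T := by linarith
  set cT := Real.cos T with hcTdef
  have hcT0 : cT ≤ 0 := Real.cos_nonpos_of_pi_div_two_le_of_le hTge (by linarith)
  -- halfplane fact for all generators
  have halfG : ∀ x ∈ K ∪ K', 0 ≤ ⟪m, x - xc⟫ := by
    intro x hx
    rcases hx with h | h
    · exact halfK x h
    · nlinarith [halfK' x h]
  -- pairwise bound on signed angles of generators
  have gdiff : ∀ y ∈ K ∪ K', ∀ z ∈ K ∪ K', y ≠ xc → z ≠ xc →
      |alp m (y - xc) - alp m (z - xc)| ≤ T := by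
    intro y hy z hz hy0 hz0
    have habsy := abs_alp_le m (y - xc)
    have habsz := abs_alp_le m (z - xc)
    rcases hy with hyK | hyK' <;> rcases hz with hzK | hzK'
    · have := Dpair y hyK z hzK hy0 hz0
      rw [hTdef]; linarith
    · obtain ⟨_, hDF⟩ := DFACT z hzK'
      rcases hDF with h0 | ⟨p, hpK, hpxc, hb⟩
      · rw [h0, sub_zero, hTdef]; linarith
      · have h1 := Dpair y hyK p hpK hy0 hpxc
        have e1 := abs_le.1 h1
        have e2 := abs_le.1 habsy
        have e3 := abs_le.1 hb
        rw [hTdef, abs_le]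
        obtain ⟨e11, e12⟩ := e1; obtain ⟨e21, e22⟩ := e2; obtain ⟨e31, e32⟩ := e3
        constructor <;> linarith
    · obtain ⟨_, hDF⟩ := DFACT y hyK'
      rcases hDF with h0 | ⟨p, hpK, hpxc, hb⟩
      · rw [h0, zero_sub, abs_neg, hTdef]; linarith
      · have h1 := Dpair z hzK p hpK hz0 hpxc
        have e1 := abs_le.1 h1
        have e2 := abs_le.1 habsz
        have e3 := abs_le.1 hb
        rw [hTdef, abs_le]
        obtain ⟨e11, e12⟩ := e1; obtain ⟨e21, e22⟩ := e2; obtain ⟨e31, e32⟩ := e3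
        constructor <;> linarith
    · obtain ⟨_, hDFy⟩ := DFACT y hyK'
      obtain ⟨_, hDFz⟩ := DFACT z hzK'
      rcases hDFy with h0y | ⟨p, hpK, hpxc, hby⟩
      · rcases hDFz with h0z | ⟨p', hp'K, hp'xc, hbz⟩
        · rw [h0y, h0z, sub_zero, abs_zero]; linarith
        · rw [h0y, zero_sub, abs_neg, hTdef]; linarith
      · rcases hDFz with h0z | ⟨p', hp'K, hp'xc, hbz⟩
        · rw [h0z, sub_zero, hTdef]; linarith
        · have h1 := Dpair p hpK p' hp'K hpxc hp'xc
          have e1 := abs_le.1 h1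
          have e3 := abs_le.1 hby
          have e4 := abs_le.1 hbz
          rw [hTdef, abs_le]
          obtain ⟨e11, e12⟩ := e1; obtain ⟨e31, e32⟩ := e3; obtain ⟨e41, e42⟩ := e4
          constructor <;> linarith
  -- the convex join
  set J := convexJoin ℝ K K' with hJdef
  have hJcomp : IsCompact J := by
    have hJeq : J = (fun p : (E2 × E2) × ℝ => p.2 • p.1.1 + (1 - p.2) • p.1.2) ''
        ((K ×ˢ K') ×ˢ Set.Icc (0:ℝ) 1) := by
      ext zz
      constructor
      · intro hzJ
        rw [hJdef, mem_convexJoin] at hzJ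
        obtain ⟨x, hx, y, hy, hseg⟩ := hzJ
        obtain ⟨sa, sb, hsa, hsb, hab, rfl⟩ := hseg
        refine ⟨((x, y), sa), ⟨⟨hx, hy⟩, ⟨hsa, by linarith⟩⟩, ?_⟩
        simp only
        rw [show (1:ℝ) - sa = sb by linarith]
      · rintro ⟨⟨⟨x, y⟩, t⟩, ⟨⟨hx, hy⟩, ht0, ht1⟩, rfl⟩
        rw [hJdef, mem_convexJoin]
        exact ⟨x, hx, y, hy, t, 1 - t, ht0, by linarith, by ring, rfl⟩
    rw [hJeq]
    exact (((hKcomp.prod hK'comp).prod isCompact_Icc).image (by fun_prop))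
  have hQJ : closure Q ⊆ J := by
    apply closure_minimal _ hJcomp.isClosed
    rw [hQ]
    calc convexHull ℝ (D ∪ D') ⊆ convexHull ℝ (K ∪ K') :=
          convexHull_mono (Set.union_subset_union subset_closure subset_closure)
      _ = J := hKconv.convexHull_union hK'conv hKne hK'ne
  -- every point of `closure Q` has direction between two generator directions
  have spanQ : ∀ y ∈ closure Q, y ≠ xc → (0 ≤ ⟪m, y - xc⟫ ∧
      ∃ u, (u ∈ K ∪ K' ∧ u ≠ xc) ∧ ∃ v, (v ∈ K ∪ K' ∧ v ≠ xc) ∧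
        min (alp m (u - xc)) (alp m (v - xc)) ≤ alp m (y - xc) ∧
        alp m (y - xc) ≤ max (alp m (u - xc)) (alp m (v - xc))) := by
    intro y hyQ hyne
    obtain ⟨y1, hy1, y2, hy2, sa, sb, hsa, hsb, hsab, hyeq⟩ := mem_convexJoin.1 (hQJ hyQ)
    have hw : y - xc = sa • (y1 - xc) + sb • (y2 - xc) := by
      calc y - xc = sa • y1 + sb • y2 - (sa + sb) • xc := by
            rw [hsab, one_smul, hyeq]
        _ = sa • (y1 - xc) + sb • (y2 - xc) := by module
    have hw0 : y - xc ≠ 0 := sub_ne_zero.2 hyne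
    by_cases h1 : y1 = xc
    · have hw2 : y - xc = sb • (y2 - xc) := by
        rw [hw, h1, sub_self, smul_zero, zero_add]
      have hy2ne : y2 ≠ xc := by
        intro h; apply hw0; rw [hw2, h, sub_self, smul_zero]
      have hsbpos : 0 < sb := by
        rcases lt_or_eq_of_le hsb with h | h
        · exact h
        · exfalso; apply hw0; rw [hw2, ← h, zero_smul]
      have halpy : alp m (y - xc) = alp m (y2 - xc) := by
        rw [hw2, alp_smul _ _ _ hsbpos]
      refine ⟨?_, y2, ⟨Set.mem_union_right _ hy2, hy2ne⟩,
        y2, ⟨Set.mem_union_right _ hy2, hy2ne⟩, ?_, ?_⟩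
      · rw [hw2, real_inner_smul_right]
        exact mul_nonneg hsb (halfG y2 (Set.mem_union_right _ hy2))
      · rw [halpy, min_self]
      · rw [halpy, max_self]
    by_cases h2 : y2 = xc
    · have hw2 : y - xc = sa • (y1 - xc) := by
        rw [hw, h2, sub_self, smul_zero, add_zero]
      have hy1ne : y1 ≠ xc := h1
      have hsapos : 0 < sa := by
        rcases lt_or_eq_of_le hsa with h | h
        · exact h
        · exfalso; apply hw0; rw [hw2, ← h, zero_smul]
      have halpy : alp m (y - xc) = alp m (y1 - xc) := by
        rw [hw2, alp_smul _ _ _ hsapos]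
      refine ⟨?_, y1, ⟨Set.mem_union_left _ hy1, hy1ne⟩,
        y1, ⟨Set.mem_union_left _ hy1, hy1ne⟩, ?_, ?_⟩
      · rw [hw2, real_inner_smul_right]
        exact mul_nonneg hsa (halfG y1 (Set.mem_union_left _ hy1))
      · rw [halpy, min_self]
      · rw [halpy, max_self]
    have hw1ne : y1 - xc ≠ 0 := sub_ne_zero.2 h1
    have hw2ne : y2 - xc ≠ 0 := sub_ne_zero.2 h2
    have hpu := halfG y1 (Set.mem_union_left _ hy1)
    have hpv := halfG y2 (Set.mem_union_right _ hy2)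
    have hWne : sa • (y1 - xc) + sb • (y2 - xc) ≠ 0 := by rw [← hw]; exact hw0
    refine ⟨?_, y1, ⟨Set.mem_union_left _ hy1, h1⟩,
      y2, ⟨Set.mem_union_right _ hy2, h2⟩, ?_, ?_⟩
    · rw [hw, inner_add_right, real_inner_smul_right, real_inner_smul_right]
      nlinarith [mul_nonneg hsa hpu, mul_nonneg hsb hpv]
    · rw [hw]
      exact min_le_alp m _ _ hm0 hw1ne hw2ne hpu hpv hsa hsb hWne
    · rw [hw]
      exact alp_le_max m _ _ hm0 hw1ne hw2ne hpu hpv hsa hsb hWne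
  -- the quantitative bound over all of `closure Q`
  have join : ∀ y ∈ closure Q, ∀ z ∈ closure Q,
      cT * (‖y - xc‖ * ‖z - xc‖) ≤ ⟪y - xc, z - xc⟫ := by
    intro y hy z hz
    by_cases hy0 : y = xc
    · rw [hy0, sub_self]; simp
    by_cases hz0 : z = xc
    · rw [hz0, sub_self]; simp
    obtain ⟨hpy, u1, ⟨hu1G, hu1ne⟩, v1, ⟨hv1G, hv1ne⟩, hmin1, hmax1⟩ := spanQ y hy hy0
    obtain ⟨hpz, u2, ⟨hu2G, hu2ne⟩, v2, ⟨hv2G, hv2ne⟩, hmin2, hmax2⟩ := spanQ z hz hz0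
    have hwy0 : y - xc ≠ 0 := sub_ne_zero.2 hy0
    have hwz0 : z - xc ≠ 0 := sub_ne_zero.2 hz0
    have hdiff : |alp m (y - xc) - alp m (z - xc)| ≤ T := by
      obtain ⟨g11a, g11b⟩ := abs_le.1 (gdiff u1 hu1G u2 hu2G hu1ne hu2ne)
      obtain ⟨g12a, g12b⟩ := abs_le.1 (gdiff u1 hu1G v2 hv2G hu1ne hv2ne)
      obtain ⟨g21a, g21b⟩ := abs_le.1 (gdiff v1 hv1G u2 hu2G hv1ne hu2ne)
      obtain ⟨g22a, g22b⟩ := abs_le.1 (gdiff v1 hv1G v2 hv2G hv1ne hv2ne)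
      rw [abs_le]
      rcases max_cases (alp m (u1 - xc)) (alp m (v1 - xc)) with ⟨e1, _⟩ | ⟨e1, _⟩ <;>
        rcases min_cases (alp m (u1 - xc)) (alp m (v1 - xc)) with ⟨e2, _⟩ | ⟨e2, _⟩ <;>
        rcases max_cases (alp m (u2 - xc)) (alp m (v2 - xc)) with ⟨e3, _⟩ | ⟨e3, _⟩ <;>
        rcases min_cases (alp m (u2 - xc)) (alp m (v2 - xc)) with ⟨e4, _⟩ | ⟨e4, _⟩ <;>
        constructor <;> linarith
    have hcos := cos_alp_sub m (y - xc) (z - xc) hm0 hwy0 hwz0 hpy hpz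
    have hcosge : cT ≤ Real.cos (alp m (y - xc) - alp m (z - xc)) := by
      rw [← Real.cos_abs (alp m (y - xc) - alp m (z - xc))]
      exact Real.cos_le_cos_of_nonneg_of_le_pi (abs_nonneg _) hT2 hdiff
    have hN : 0 < ‖y - xc‖ * ‖z - xc‖ :=
      mul_pos (norm_pos_iff.2 hwy0) (norm_pos_iff.2 hwz0)
    have heq : ⟪y - xc, z - xc⟫ =
        Real.cos (alp m (y - xc) - alp m (z - xc)) * (‖y - xc‖ * ‖z - xc‖) := by
      rw [hcos]
      field_simp
    rw [heq]
    exact mul_le_mul_of_nonneg_right hcosge hN.le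
  -- extend to the tangent cone
  have coneF : ∀ u ∈ tangentConeOf (closure Q) xc, ∀ v ∈ tangentConeOf (closure Q) xc,
      cT * (‖u‖ * ‖v‖) ≤ ⟪u, v⟫ := by
    have precone : ∀ u ∈ {v : E2 | ∃ t : ℝ, 0 ≤ t ∧ ∃ y ∈ closure Q, v = t • (y - xc)},
        ∀ v ∈ {v : E2 | ∃ t : ℝ, 0 ≤ t ∧ ∃ y ∈ closure Q, v = t • (y - xc)},
        cT * (‖u‖ * ‖v‖) ≤ ⟪u, v⟫ := by
      rintro u ⟨t, ht, y, hy, rfl⟩ v ⟨s, hs, z, hz, rfl⟩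
      have hj := join y hy z hz
      rw [real_inner_smul_left, real_inner_smul_right, norm_smul, norm_smul,
        Real.norm_eq_abs, Real.norm_eq_abs, abs_of_nonneg ht, abs_of_nonneg hs]
      calc cT * (t * ‖y - xc‖ * (s * ‖z - xc‖))
          = (t * s) * (cT * (‖y - xc‖ * ‖z - xc‖)) := by ring
        _ ≤ (t * s) * ⟪y - xc, z - xc⟫ :=
            mul_le_mul_of_nonneg_left hj (mul_nonneg ht hs)
        _ = t * (s * ⟪y - xc, z - xc⟫) := by ring
    intro u hu v hv
    rw [tangentConeOf] at hu hv
    have step1 : ∀ v' ∈ {w : E2 | ∃ t : ℝ, 0 ≤ t ∧ ∃ y ∈ closure Q, w = t • (y - xc)},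
        cT * (‖u‖ * ‖v'‖) ≤ ⟪u, v'⟫ := by
      intro v' hv'
      have hclosed : IsClosed {w : E2 | cT * (‖w‖ * ‖v'‖) ≤ ⟪w, v'⟫} :=
        isClosed_le (continuous_const.mul (continuous_norm.mul continuous_const))
          (continuous_id.inner continuous_const)
      exact closure_minimal (fun w hw => precone w hw v' hv') hclosed hu
    have hclosed2 : IsClosed {w : E2 | cT * (‖u‖ * ‖w‖) ≤ ⟪u, w⟫} :=
      isClosed_le (continuous_const.mul (continuous_const.mul continuous_norm))
        (continuous_const.inner continuous_id)
    exact closure_minimal (fun w hw => step1 w hw) hclosed2 hv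
  -- conclude
  rw [coneOpening]
  apply Real.sSup_le
  · rintro θ ⟨u, hu, v, hv, hu0, hv0, rfl⟩
    have hF := coneF u hu v hv
    have hNu : 0 < ‖u‖ := norm_pos_iff.2 hu0
    have hNv : 0 < ‖v‖ := norm_pos_iff.2 hv0
    have hratio : cT ≤ ⟪u, v⟫ / (‖u‖ * ‖v‖) :=
      (le_div_iff₀ (mul_pos hNu hNv)).2 hF
    rw [InnerProductGeometry.angle]
    calc Real.arccos (⟪u, v⟫ / (‖u‖ * ‖v‖)) ≤ Real.arccos cT := by
          rw [Real.arccos_eq_pi_div_two_sub_arcsin, Real.arccos_eq_pi_div_two_sub_arcsin]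
          linarith [Real.monotone_arcsin hratio]
      _ = T := by rw [hcTdef]; exact Real.arccos_cos hT0 hT2
  · exact hT0

end
end

section
/- Let 0 < η < 1, τ > 0, a ∈ (0, π), Φ ∈ ℝ, K > 0, and set φ(θ) = cos(ηθ + Φ). Let θ⁺ = a/2, θ⁻ = -a/2, and Z_± = -τ e^{i θ^∓} ∈ ℂ. Then with I(z₀,η) = (-1/z₀)^η Γ(η) we have |K(φ'(θ⁺) I(Z₊,η) − φ'(θ⁻) I(Z₋,η))| = K Γ(η) τ^{-η} |φ'(θ⁺) e^{i a η} − φ'(θ⁻)| ≥ K Γ(η) sin(aη) τ^{-η} · η. -/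
open Complex

/-- `I(z₀,η) = (-1/z₀)^η Γ(η)` (principal branch). -/
noncomputable def Ival (z₀ : ℂ) (η : ℝ) : ℂ := (-1 / z₀) ^ (η : ℂ) * Complex.Gamma η

lemma trig_key (α f : ℝ) :
    ((-Real.sin (α + f)) * Real.cos (2*α) - (-Real.sin (-α + f)))^2
      + ((-Real.sin (α + f)) * Real.sin (2*α))^2 = (Real.sin (2*α))^2 := by
  have hp := Real.sin_sq_add_cos_sq α
  have hq := Real.sin_sq_add_cos_sq f
  rw [Real.sin_add, Real.sin_add (-α) f, Real.cos_two_mul, Real.sin_two_mul,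
    Real.sin_neg, Real.cos_neg]
  set sa := Real.sin α
  set ca := Real.cos α
  set sf := Real.sin f
  set cf := Real.cos f
  linear_combination (4*sa^2*ca^2) * hq +
    (4*ca^2*(sa*cf+ca*sf)^2 - 2*(ca^2*sf^2 - sa^2*cf^2) - 2*(ca^2*sf^2+sa^2*cf^2)) * hp

lemma Ival_eq (τ θ η : ℝ) (hτ : 0 < τ) (h1 : -Real.pi < -θ) (h2 : -θ ≤ Real.pi) :
    Ival (-(τ:ℂ) * Complex.exp (Complex.I * (θ:ℂ))) η
      = ((τ ^ (-η) : ℝ) : ℂ) * Complex.exp (Complex.I * ((η * -θ : ℝ) : ℂ)) *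
        Complex.Gamma η := by
  unfold Ival
  congr 1
  have hE : Complex.exp (Complex.I * (θ:ℂ)) ≠ 0 := Complex.exp_ne_zero _
  have hτ' : (τ:ℂ) ≠ 0 := Complex.ofReal_ne_zero.mpr hτ.ne'
  have hw : -1 / (-(τ:ℂ) * Complex.exp (Complex.I * (θ:ℂ)))
      = Complex.exp (((Real.log τ⁻¹ : ℝ) : ℂ) + ((-θ:ℝ) : ℂ) * Complex.I) := by
    rw [Complex.exp_add, ← Complex.ofReal_exp, Real.exp_log (inv_pos.mpr hτ),
      show ((-θ:ℝ) : ℂ) * Complex.I = -(Complex.I * (θ:ℂ)) by push_cast; ring,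
      Complex.exp_neg]
    push_cast
    field_simp
  rw [hw, Complex.cpow_def_of_ne_zero (Complex.exp_ne_zero _),
    Complex.log_exp (by simpa using h1) (by simpa using h2),
    show (((Real.log τ⁻¹ : ℝ) : ℂ) + ((-θ:ℝ) : ℂ) * Complex.I) * (η : ℂ)
        = ((Real.log τ⁻¹ * η : ℝ) : ℂ) + Complex.I * ((η * -θ : ℝ) : ℂ) by
      push_cast; ring,
    Complex.exp_add]
  congr 1
  rw [← Complex.ofReal_exp]
  congr 1
  rw [Real.log_inv, Real.rpow_def_of_pos hτ]
  congr 1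
  ring

theorem stmt8 (η τ a Φ K : ℝ)
    (hη : η ∈ Set.Ioo (0:ℝ) 1) (hτ : 0 < τ) (ha : a ∈ Set.Ioo (0:ℝ) Real.pi)
    (hK : 0 < K)
    (φ : ℝ → ℝ) (hφ : ∀ θ, φ θ = Real.cos (η * θ + Φ))
    (θp θm : ℝ) (hθp : θp = a / 2) (hθm : θm = -(a / 2))
    (dp dm : ℝ) (hdp : dp = deriv φ θp) (hdm : dm = deriv φ θm)
    (Zp Zm : ℂ) (hZp : Zp = -τ * Complex.exp (Complex.I * (θm : ℂ)))
    (hZm : Zm = -τ * Complex.exp (Complex.I * (θp : ℂ))) :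
    ‖(K : ℂ) * ((dp : ℂ) * Ival Zp η - (dm : ℂ) * Ival Zm η)‖ =
      K * Real.Gamma η * τ ^ (-η) *
        ‖(dp : ℂ) * Complex.exp (Complex.I * ((a * η : ℝ) : ℂ)) - (dm : ℂ)‖ ∧
    K * Real.Gamma η * τ ^ (-η) *
        ‖(dp : ℂ) * Complex.exp (Complex.I * ((a * η : ℝ) : ℂ)) - (dm : ℂ)‖ ≥
      K * Real.Gamma η * Real.sin (a * η) * τ ^ (-η) * η := by
  obtain ⟨hη0, hη1⟩ := hη
  obtain ⟨ha0, haπ⟩ := ha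
  have hπ := Real.pi_pos
  -- derivative of φ
  have hφ' : φ = fun θ => Real.cos (η * θ + Φ) := funext hφ
  have hderiv : ∀ θ : ℝ, deriv φ θ = -Real.sin (η * θ + Φ) * η := by
    intro θ
    have h1 : HasDerivAt (fun x : ℝ => η * x + Φ) η θ := by
      simpa using ((hasDerivAt_id θ).const_mul η).add_const Φ
    have h2 : HasDerivAt φ (-Real.sin (η * θ + Φ) * η) θ := by
      rw [hφ']; exact h1.cos
    exact h2.deriv
  have hdp' : dp = -Real.sin (η * θp + Φ) * η := by rw [hdp, hderiv]
  have hdm' : dm = -Real.sin (η * θm + Φ) * η := by rw [hdm, hderiv]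
  -- compute the Ivals
  have hIp : Ival Zp η = ((τ ^ (-η) : ℝ) : ℂ) *
      Complex.exp (Complex.I * ((η * -θm : ℝ) : ℂ)) * Complex.Gamma η := by
    rw [hZp]
    exact Ival_eq τ θm η hτ (by rw [hθm]; simp; linarith) (by rw [hθm]; simp; linarith)
  have hIm : Ival Zm η = ((τ ^ (-η) : ℝ) : ℂ) *
      Complex.exp (Complex.I * ((η * -θp : ℝ) : ℂ)) * Complex.Gamma η := by
    rw [hZm]
    exact Ival_eq τ θp η hτ (by rw [hθp]; linarith) (by rw [hθp]; linarith)
  have hexp : Complex.exp (Complex.I * ((η * -θm : ℝ) : ℂ)) =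
      Complex.exp (Complex.I * ((η * -θp : ℝ) : ℂ)) *
        Complex.exp (Complex.I * ((a * η : ℝ) : ℂ)) := by
    rw [← Complex.exp_add]
    congr 1
    rw [hθm, hθp]
    push_cast
    ring
  have hfac : (K : ℂ) * ((dp : ℂ) * Ival Zp η - (dm : ℂ) * Ival Zm η)
      = ((K : ℂ) * ((τ ^ (-η) : ℝ) : ℂ) * Complex.Gamma η *
          Complex.exp (Complex.I * ((η * -θp : ℝ) : ℂ))) *
        ((dp : ℂ) * Complex.exp (Complex.I * ((a * η : ℝ) : ℂ)) - (dm : ℂ)) := by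
    rw [hIp, hIm, hexp]; ring
  have hτη : (0:ℝ) < τ ^ (-η) := Real.rpow_pos_of_pos hτ _
  have hΓ : (0:ℝ) < Real.Gamma η := Real.Gamma_pos_of_pos hη0
  have hA : ‖(K : ℂ) * ((τ ^ (-η) : ℝ) : ℂ) * Complex.Gamma η *
      Complex.exp (Complex.I * ((η * -θp : ℝ) : ℂ))‖ = K * Real.Gamma η * τ ^ (-η) := by
    rw [Complex.Gamma_ofReal]
    simp [norm_mul, Complex.norm_real, Complex.norm_exp, abs_of_pos hK, abs_of_pos hτη,
      abs_of_pos hΓ]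
    ring
  have hsin : 0 < Real.sin (a * η) :=
    Real.sin_pos_of_pos_of_lt_pi (by positivity) (by nlinarith)
  have he : Complex.exp (Complex.I * ((a * η : ℝ) : ℂ))
      = ((Real.cos (a * η) : ℝ) : ℂ) + ((Real.sin (a * η) : ℝ) : ℂ) * Complex.I := by
    rw [mul_comm, Complex.exp_mul_I, ← Complex.ofReal_cos, ← Complex.ofReal_sin]
  have hkey : η * Real.sin (a * η) ≤
      ‖(dp : ℂ) * Complex.exp (Complex.I * ((a * η : ℝ) : ℂ)) - (dm : ℂ)‖ := by
    have hsq : (‖(dp : ℂ) * Complex.exp (Complex.I * ((a * η : ℝ) : ℂ)) - (dm : ℂ)‖)^2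
        = (dp * Real.cos (a * η) - dm)^2 + (dp * Real.sin (a * η))^2 := by
      rw [Complex.sq_norm, he]
      simp only [Complex.normSq_apply, Complex.sub_re, Complex.sub_im, Complex.add_re,
        Complex.add_im, Complex.mul_re, Complex.mul_im, Complex.ofReal_re, Complex.ofReal_im,
        Complex.I_re, Complex.I_im]
      ring
    rw [hθm] at hdm'
    rw [show η * -(a / 2) + Φ = -(η * (a / 2)) + Φ by ring] at hdm'
    rw [hθp] at hdp'
    have htk := trig_key (η * (a / 2)) Φ
    rw [show 2 * (η * (a / 2)) = a * η by ring] at htk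
    have heq : (dp * Real.cos (a * η) - dm)^2 + (dp * Real.sin (a * η))^2
        = (η * Real.sin (a * η))^2 := by
      rw [hdp', hdm']
      linear_combination (η^2) * htk
    have hnn : 0 ≤ ‖(dp : ℂ) * Complex.exp (Complex.I * ((a * η : ℝ) : ℂ)) - (dm : ℂ)‖ :=
      norm_nonneg _
    nlinarith [hsq.trans heq, mul_nonneg hη0.le hsin.le]
  constructor
  · rw [hfac, norm_mul, hA]
  · have hfact : 0 ≤ (K * Real.Gamma η * τ ^ (-η)) *
        (‖(dp : ℂ) * Complex.exp (Complex.I * ((a * η : ℝ) : ℂ)) - (dm : ℂ)‖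
          - η * Real.sin (a * η)) :=
      mul_nonneg (by positivity) (by linarith)
    nlinarith [hfact]
end

section
/- Let η ∈ (0,1), Φ ∈ ℝ, a ∈ (0,π), and set φ(θ) = cos(ηθ + Φ), θ± = ±a/2. Then |φ'(θ⁺) e^{i aη} − φ'(θ⁻)| ≥ η sin(aη). -/
theorem stmt9 (η Φ a : ℝ) (hη : η ∈ Set.Ioo (0:ℝ) 1) (ha : a ∈ Set.Ioo (0:ℝ) Real.pi)
    (φ : ℝ → ℝ) (hφ : ∀ θ, φ θ = Real.cos (η * θ + Φ))
    (θp θm : ℝ) (hθp : θp = a / 2) (hθm : θm = -(a / 2))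
    (dp dm : ℝ) (hdp : dp = deriv φ θp) (hdm : dm = deriv φ θm) :
    η * Real.sin (a * η) ≤
      ‖(dp : ℂ) * Complex.exp (Complex.I * ((a * η : ℝ) : ℂ)) - (dm : ℂ)‖ := by
  obtain ⟨hη0, hη1⟩ := hη
  obtain ⟨ha0, haπ⟩ := ha
  have hsin : 0 ≤ Real.sin (a * η) := by
    apply Real.sin_nonneg_of_nonneg_of_le_pi
    · positivity
    · nlinarith [Real.pi_pos]
  have hderiv : ∀ θ, deriv φ θ = -(η * Real.sin (η * θ + Φ)) := by
    intro θ
    have hφ' : φ = fun θ => Real.cos (η * θ + Φ) := funext hφ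
    subst hφ'
    have h1 : HasDerivAt (fun θ : ℝ => η * θ + Φ) η θ := by
      simpa using ((hasDerivAt_id θ).const_mul η).add_const Φ
    have h2 := (Real.hasDerivAt_cos (η * θ + Φ)).comp θ h1
    have h3 := h2.deriv
    simp only [Function.comp_def] at h3
    rw [h3]; ring
  have hdp' : dp = -(η * Real.sin (Φ + η * (a/2))) := by
    rw [hdp, hderiv, hθp]; ring_nf
  have hdm' : dm = -(η * Real.sin ((Φ + η * (a/2)) - a * η)) := by
    rw [hdm, hderiv, hθm]; ring_nf
  have key : ((dp : ℂ) * Complex.exp (Complex.I * ((a * η : ℝ) : ℂ)) - (dm : ℂ))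
      = ↑(-(η * Real.sin (a * η))) * Complex.exp (Complex.I * ((Φ + η * (a/2) : ℝ) : ℂ)) := by
    rw [hdp', hdm', mul_comm Complex.I, mul_comm Complex.I, Complex.exp_mul_I,
        Complex.exp_mul_I, Real.sin_sub]
    push_cast
    apply Complex.ext <;> simp <;> ring
  rw [key, norm_mul, Complex.norm_real, Complex.norm_exp]
  simp [abs_of_nonpos (neg_nonpos.mpr (mul_nonneg hη0.le hsin)), abs_of_nonneg hη0.le, abs_of_nonneg hsin]
end
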